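/- For the bump allocator, after any feasible allocation sequence starting from an initialized heap, the bump pointer strictly exceeds every client-accessible address and the null address: for all a ∈ addrs(Φ₁) ∪ R ∪ {null}, a < A₁ where A₁ is the final allocator state. -/

import Mathlib

inductive SymbEvent : Type
  | malloc (k : ℕ)
  | mfail (k : ℕ)
  | free (z : ℕ)
deriving DecidableEq

/-- Auxiliary: freeIndex on the reversed sequence. -/
def freeIndexRev : List SymbEvent → ℕ → Option ℕ
  | [], _ => none
  | SymbEvent.malloc _ :: rest, 0 => some (rest.length + 1)
  | SymbEvent.malloc _ :: rest, z + 1 => freeIndexRev rest z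
  | SymbEvent.mfail _ :: rest, z => freeIndexRev rest z
  | SymbEvent.free _ :: rest, z => freeIndexRev rest z

/-- `freeIndex σ z`: 1-based index of the `z`-th successful malloc counting backwards. -/
def freeIndex (σ : List SymbEvent) (z : ℕ) : Option ℕ := freeIndexRev σ.reverse z

/-- `MallocFreeRel σ i j`: the free event at (1-based) position `j` corresponds to
the malloc at position `i`. -/
def MallocFreeRel (σ : List SymbEvent) (i j : ℕ) : Prop :=
  (∃ k, σ[i - 1]? = some (SymbEvent.malloc k)) ∧
  ∃ z, σ[j - 1]? = some (SymbEvent.free z) ∧ freeIndex (σ.take (j - 1)) z = some i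

/-- Well-formedness of a symbolic allocation sequence: every free event has a
matching malloc, and no malloc is matched by two different frees. -/
def WellFormedSeq (σ : List SymbEvent) : Prop :=
  (∀ j z, σ[j - 1]? = some (SymbEvent.free z) → ∃ i, MallocFreeRel σ i j) ∧
  (∀ i j j', MallocFreeRel σ i j → MallocFreeRel σ i j' → j = j')

/-- A heap: a partial function from addresses to integer values. -/
abbrev Heap := ℕ → Option ℤ

/-- Allocation map: set of triples (address, size, index-in-sequence). -/
abbrev AllocMap := Set (ℕ × ℕ × ℕ)

/-- Addresses covered by an allocation map. -/
def addrsOf (Φ : AllocMap) : Set ℕ :=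
  {x | ∃ p ∈ Φ, p.1 ≤ x ∧ x < p.1 + p.2.1}

/-- An allocation strategy with allocator-state type `A`. -/
structure Strategy (A : Type) where
  null : ℕ
  init : Heap → Heap × A
  malloc : Heap → A → ℕ → Heap × A × ℕ
  free : Heap → A → ℕ → Heap × A

/-- Step feasibility (play relation). -/
inductive Step {A : Type} (α : Strategy A) :
    AllocMap → Heap → A → List SymbEvent → SymbEvent → Heap → A → AllocMap → Prop
  | mallocOk {Φ : AllocMap} {H : Heap} {st : A} {σ : List SymbEvent}
      {k : ℕ} {H' : Heap} {st' : A} {a : ℕ} :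
      α.malloc H st k = (H', st', a) → a ≠ α.null →
      Step α Φ H st σ (SymbEvent.malloc k) H' st' (Φ ∪ {(a, k, σ.length + 1)})
  | mallocFail {Φ : AllocMap} {H : Heap} {st : A} {σ : List SymbEvent}
      {k : ℕ} {H' : Heap} {st' : A} {a : ℕ} :
      α.malloc H st k = (H', st', a) → a = α.null →
      Step α Φ H st σ (SymbEvent.mfail k) H' st' Φ
  | free {Φ : AllocMap} {H : Heap} {st : A} {σ : List SymbEvent}
      {z i k a : ℕ} {H' : Heap} {st' : A} :
      MallocFreeRel (σ ++ [SymbEvent.free z]) i (σ.length + 1) →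
      (σ ++ [SymbEvent.free z])[i - 1]? = some (SymbEvent.malloc k) →
      (a, k, i) ∈ Φ →
      α.free H st a = (H', st') →
      Step α Φ H st σ (SymbEvent.free z) H' st' (Φ \ {(a, k, i)})

/-- Sequence feasibility (fast-forward relation), interleaving arbitrary client
updates to client-accessible memory `addrsOf Φ ∪ R` with allocator steps. -/
inductive FF {A : Type} (α : Strategy A) (R : Set ℕ) :
    AllocMap → Heap → A → List SymbEvent → Heap → A → AllocMap → Prop
  | empty {Φ : AllocMap} {H : Heap} {st : A} : FF α R Φ H st [] H st Φ
  | step {Φ : AllocMap} {H : Heap} {st : A} {σ : List SymbEvent}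
      {H' : Heap} {st' : A} {Φ' : AllocMap} {Hu : Heap} {e : SymbEvent}
      {H'' : Heap} {st'' : A} {Φ'' : AllocMap} :
      FF α R Φ H st σ H' st' Φ' →
      (∀ a ∉ addrsOf Φ' ∪ R, Hu a = H' a) →
      Step α Φ' Hu st' σ e H'' st'' Φ'' →
      FF α R Φ H st (σ ++ [e]) H'' st'' Φ''

/-- The bump allocator on the memory segment `[N₁,N₃)` with reserved `[N₁,N₂)`;
its state is the bump pointer. -/
def bump (N₁ N₂ N₃ : ℕ) : Strategy ℕ where
  null := N₂
  init H := ((fun i => if i = N₂ then none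
      else if H i = none ∧ N₂ + 1 ≤ i ∧ i < N₃ then some 0 else H i), N₂ + 1)
  malloc H p s :=
    if 0 < s ∧ p + s ≤ N₃ then (H, p + s, p)
    else if s = 0 ∧ p + 1 ≤ N₃ then (H, p + 1, p)
    else (H, p, N₂)
  free H p _ := (H, p)

/-! The invariant "every client-accessible address and null lie below the bump pointer" holds
after `init`, since null = N₂ < N₂ + 1. A successful malloc returns the current pointer A and
moves it to at least A + k, past the new block; a free only shrinks Φ; and a failing malloc
leaves the pointer alone — it cannot be a success in disguise, because the invariant gives
null < A, so the returned A is never null. -/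

theorem addrsOf_empty : addrsOf ∅ = ∅ := by
  simp [addrsOf]

theorem addrsOf_mono {Φ Ψ : AllocMap} (h : Φ ⊆ Ψ) : addrsOf Φ ⊆ addrsOf Ψ :=
  fun _ ⟨q, hq, hx⟩ => ⟨q, h hq, hx⟩

theorem addrsOf_union_singleton (Φ : AllocMap) (a k i : ℕ) :
    addrsOf (Φ ∪ {(a, k, i)}) = addrsOf Φ ∪ Set.Ico a (a + k) := by
  ext x
  simp [addrsOf, or_and_right, exists_or, or_comm]

theorem bump_malloc_cases {N₁ N₂ N₃ : ℕ} {H H' : Heap} {p s p' a : ℕ}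
    (h : (bump N₁ N₂ N₃).malloc H p s = (H', p', a)) :
    (a = N₂ ∧ p' = p) ∨ (a = p ∧ p' = p + max s 1) := by
  simp only [bump] at h
  split_ifs at h <;> simp only [Prod.mk.injEq] at h <;> omega

section Invariant

variable {N₁ N₂ N₃ : ℕ} {R : Set ℕ} {Φ Φ' : AllocMap} {H H' : Heap} {p p' : ℕ}

theorem Step.bump_addrs_subset_Iio {σ : List SymbEvent} {e : SymbEvent}
    (hstep : Step (bump N₁ N₂ N₃) Φ H p σ e H' p' Φ')
    (hinv : addrsOf Φ ∪ R ∪ {N₂} ⊆ Set.Iio p) :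
    addrsOf Φ' ∪ R ∪ {N₂} ⊆ Set.Iio p' := by
  cases hstep with
  | @mallocOk k _ _ a hmalloc hne =>
    rcases bump_malloc_cases hmalloc with ⟨hnull, -⟩ | ⟨ha, rfl⟩
    · exact absurd hnull hne
    · subst a
      have hgrow : Set.Iio p ⊆ Set.Iio (p + max k 1) := Set.Iio_subset_Iio (by omega)
      have hblock : Set.Ico p (p + k) ⊆ Set.Iio (p + max k 1) :=
        Set.Ico_subset_Iio_self.trans (Set.Iio_subset_Iio (by omega))
      simp only [addrsOf_union_singleton, Set.union_subset_iff] at hinv ⊢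
      exact ⟨⟨⟨hinv.1.1.trans hgrow, hblock⟩, hinv.1.2.trans hgrow⟩, hinv.2.trans hgrow⟩
  | mallocFail hmalloc hnull =>
    rcases bump_malloc_cases hmalloc with ⟨-, rfl⟩ | ⟨rfl, -⟩
    · exact hinv
    · exact absurd (hinv (Or.inr hnull)) Set.self_notMem_Iio
  | free _ _ _ hfree =>
    obtain rfl : p = p' := (Prod.mk.inj hfree).2
    exact (Set.union_subset_union_left _
      (Set.union_subset_union_left _ (addrsOf_mono Set.sdiff_subset))).trans hinv

theorem FF.bump_addrs_subset_Iio {σ : List SymbEvent}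
    (hff : FF (bump N₁ N₂ N₃) R Φ H p σ H' p' Φ')
    (hinv : addrsOf Φ ∪ R ∪ {N₂} ⊆ Set.Iio p) :
    addrsOf Φ' ∪ R ∪ {N₂} ⊆ Set.Iio p' := by
  induction hff with
  | empty => exact hinv
  | step _ _ hstep ih => exact hstep.bump_addrs_subset_Iio ih

end Invariant

theorem bump_pointer_invariant_general (N₁ N₂ N₃ : ℕ)
    (H₀ H₁ : Heap) (A₁ : ℕ) (Φ₁ : AllocMap) (σ : List SymbEvent)
    (R : Set ℕ) (hR : R = Set.Ico N₁ N₂)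
    (hff : FF (bump N₁ N₂ N₃) R ∅ H₀ (N₂ + 1) σ H₁ A₁ Φ₁) :
    ∀ a ∈ addrsOf Φ₁ ∪ R ∪ {(bump N₁ N₂ N₃).null}, a < A₁ := by
  refine hff.bump_addrs_subset_Iio ?_
  subst hR
  rintro x ((hx | ⟨-, hx⟩) | rfl)
  · simp [addrsOf_empty] at hx
  · exact Nat.lt_succ_of_lt hx
  · exact Nat.lt_succ_self x

theorem bump_pointer_invariant (N₁ N₂ N₃ : ℕ)
    (H H₀ H₁ : Heap) (A₁ : ℕ) (Φ₁ : AllocMap) (σ : List SymbEvent)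
    (R : Set ℕ) (hR : R = Set.Ico N₁ N₂)
    (hdom : R ⊆ {a | H a ≠ none})
    (hinit : (bump N₁ N₂ N₃).init H = (H₀, N₂ + 1))
    (hff : FF (bump N₁ N₂ N₃) R ∅ H₀ (N₂ + 1) σ H₁ A₁ Φ₁) :
    ∀ a ∈ addrsOf Φ₁ ∪ R ∪ {(bump N₁ N₂ N₃).null}, a < A₁ :=
  bump_pointer_invariant_general N₁ N₂ N₃ H₀ H₁ A₁ Φ₁ σ R hR hff
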